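/- The nullcline value of a traveling wave lies strictly between the remaining and initial resource levels: assume 0 < φ ≤ 1, 0 < μ ≤ ψ, ω > 0, at least one of φ < 1 or μ < ψ, and 0 < c < 1. Let 0 < R⁻ < R⁺ satisfy the integral relation ∫_{R⁻}^{R⁺} K(r)/r dr = 0. Then K(R⁻) > 0 > K(R⁺); in particular, if R* denotes a zero of K, then R⁻ < R* < R⁺. -/

import Mathlib

open Real Filter intervalIntegral

/-- Nondimensional stationary-to-moving switching rate. -/
noncomputable def ksm (φ R : ℝ) : ℝ := φ - (φ - 1) * Real.exp (-R)

/-- Nondimensional moving-to-stationary switching rate. -/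
noncomputable def kms (ψ μ ω R : ℝ) : ℝ := ψ - (ψ - μ) * Real.exp (-ω * R)

/-- Nullcline function K(R) = k_sm(R)/c − k_ms(R)/(1−c). -/
noncomputable def Kfun (φ ψ μ ω c R : ℝ) : ℝ := ksm φ R / c - kms ψ μ ω R / (1 - c)

/-!
`k_sm` is nonincreasing and `k_ms` nondecreasing, one of them strictly, so `K` is strictly
decreasing. If `K(R⁻) ≤ 0`, then `K < 0` on `(R⁻, R⁺)` and `∫ K(r)/r dr < 0`; symmetrically
`K(R⁺) ≥ 0` forces the integral to be positive. A zero of a strictly decreasing function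
with `K(R⁻) > 0 > K(R⁺)` lies between `R⁻` and `R⁺`.
-/

lemma ksm_antitone {φ : ℝ} (hφ : φ ≤ 1) : Antitone (ksm φ) := by
  intro x y hxy
  have : rexp (-y) ≤ rexp (-x) := exp_le_exp.mpr (neg_le_neg hxy)
  unfold ksm
  nlinarith

lemma ksm_strictAnti {φ : ℝ} (hφ : φ < 1) : StrictAnti (ksm φ) := by
  intro x y hxy
  have : rexp (-y) < rexp (-x) := exp_lt_exp.mpr (neg_lt_neg hxy)
  unfold ksm
  nlinarith

lemma kms_monotone {ψ μ ω : ℝ} (hμψ : μ ≤ ψ) (hω : 0 ≤ ω) : Monotone (kms ψ μ ω) := by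
  intro x y hxy
  have : rexp (-ω * y) ≤ rexp (-ω * x) := exp_le_exp.mpr (by nlinarith)
  unfold kms
  nlinarith

lemma kms_strictMono {ψ μ ω : ℝ} (hμψ : μ < ψ) (hω : 0 < ω) : StrictMono (kms ψ μ ω) := by
  intro x y hxy
  have : rexp (-ω * y) < rexp (-ω * x) := exp_lt_exp.mpr (by nlinarith)
  unfold kms
  nlinarith

lemma Kfun_strictAnti {φ ψ μ ω c : ℝ} (hφ : φ ≤ 1) (hμψ : μ ≤ ψ) (hω : 0 < ω)
    (hne : φ < 1 ∨ μ < ψ) (hc0 : 0 < c) (hc1 : c < 1) :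
    StrictAnti (Kfun φ ψ μ ω c) := by
  intro x y hxy
  have hc1' : 0 < 1 - c := sub_pos.mpr hc1
  have hsm := ksm_antitone hφ hxy.le
  have hms := kms_monotone hμψ hω.le hxy.le
  unfold Kfun
  rcases hne with hφ' | hμψ'
  · have := div_lt_div_of_pos_right (ksm_strictAnti hφ' hxy) hc0
    have := div_le_div_of_nonneg_right hms hc1'.le
    linarith
  · have := div_le_div_of_nonneg_right hsm hc0.le
    have := div_lt_div_of_pos_right (kms_strictMono hμψ' hω hxy) hc1'
    linarith

lemma Kfun_continuous (φ ψ μ ω c : ℝ) : Continuous (Kfun φ ψ μ ω c) := by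
  unfold Kfun ksm kms
  fun_prop

lemma integral_div_id_pos_of_pos_on {f : ℝ → ℝ} {a b : ℝ} (hf : ContinuousOn f (Set.Icc a b))
    (ha : 0 < a) (hab : a < b) (hpos : ∀ r ∈ Set.Ioo a b, 0 < f r) :
    0 < ∫ r in a..b, f r / r := by
  have hint : IntervalIntegrable (fun r => f r / r) MeasureTheory.volume a b := by
    refine ContinuousOn.intervalIntegrable ?_
    rw [Set.uIcc_of_le hab.le]
    exact hf.div continuousOn_id fun r hr => (ha.trans_le hr.1).ne'
  exact intervalIntegral_pos_of_pos_on hint (fun r hr => div_pos (hpos r hr) (ha.trans hr.1)) hab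

lemma StrictAnti.pos_left_of_integral_div_id_eq_zero {f : ℝ → ℝ} {a b : ℝ} (hf : StrictAnti f)
    (hcont : ContinuousOn f (Set.Icc a b)) (ha : 0 < a) (hab : a < b)
    (hzero : ∫ r in a..b, f r / r = 0) : 0 < f a := by
  by_contra! hfa
  have := integral_div_id_pos_of_pos_on hcont.neg ha hab
    fun r hr => neg_pos.mpr ((hf hr.1).trans_le hfa)
  simp only [Pi.neg_apply, neg_div, integral_neg, hzero, neg_zero, lt_irrefl] at this

lemma StrictAnti.neg_right_of_integral_div_id_eq_zero {f : ℝ → ℝ} {a b : ℝ} (hf : StrictAnti f)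
    (hcont : ContinuousOn f (Set.Icc a b)) (ha : 0 < a) (hab : a < b)
    (hzero : ∫ r in a..b, f r / r = 0) : f b < 0 := by
  by_contra! hfb
  have := integral_div_id_pos_of_pos_on hcont ha hab fun r hr => hfb.trans_lt (hf hr.2)
  exact this.ne' hzero

lemma StrictAnti.mem_Ioo_of_eq_zero {f : ℝ → ℝ} {a b x : ℝ} (hf : StrictAnti f)
    (ha : 0 < f a) (hb : f b < 0) (hx : f x = 0) : x ∈ Set.Ioo a b :=
  ⟨hf.lt_iff_gt.mp (hx ▸ ha), hf.lt_iff_gt.mp (hx ▸ hb)⟩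

theorem nullcline_between_general (φ ψ μ ω c Rminus Rplus : ℝ)
    (hφ1 : φ ≤ 1) (hμψ : μ ≤ ψ) (hω : 0 < ω)
    (hne : φ < 1 ∨ μ < ψ) (hc0 : 0 < c) (hc1 : c < 1)
    (hRm : 0 < Rminus) (hRmp : Rminus < Rplus)
    (hzero : (∫ r in Rminus..Rplus, Kfun φ ψ μ ω c r / r) = 0) :
    (0 < Kfun φ ψ μ ω c Rminus ∧ Kfun φ ψ μ ω c Rplus < 0) ∧
    ∀ Rstar : ℝ, Kfun φ ψ μ ω c Rstar = 0 → Rminus < Rstar ∧ Rstar < Rplus := by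
  have hanti := Kfun_strictAnti hφ1 hμψ hω hne hc0 hc1
  have hcont := (Kfun_continuous φ ψ μ ω c).continuousOn (s := Set.Icc Rminus Rplus)
  have hleft := hanti.pos_left_of_integral_div_id_eq_zero hcont hRm hRmp hzero
  have hright := hanti.neg_right_of_integral_div_id_eq_zero hcont hRm hRmp hzero
  exact ⟨⟨hleft, hright⟩, fun _ hRstar => hanti.mem_Ioo_of_eq_zero hleft hright hRstar⟩

/-- The nullcline value of a traveling wave lies strictly between the remaining and
initial resource levels: if ∫_{R⁻}^{R⁺} K(r)/r dr = 0 then K(R⁻) > 0 > K(R⁺), and any zero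
R* of K satisfies R⁻ < R* < R⁺. -/
theorem nullcline_between (φ ψ μ ω c Rminus Rplus : ℝ)
    (hφ0 : 0 < φ) (hφ1 : φ ≤ 1) (hμ0 : 0 < μ) (hμψ : μ ≤ ψ) (hω : 0 < ω)
    (hne : φ < 1 ∨ μ < ψ) (hc0 : 0 < c) (hc1 : c < 1)
    (hRm : 0 < Rminus) (hRmp : Rminus < Rplus)
    (hzero : (∫ r in Rminus..Rplus, Kfun φ ψ μ ω c r / r) = 0) :
    (0 < Kfun φ ψ μ ω c Rminus ∧ Kfun φ ψ μ ω c Rplus < 0) ∧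
    ∀ Rstar : ℝ, Kfun φ ψ μ ω c Rstar = 0 → Rminus < Rstar ∧ Rstar < Rplus :=
  nullcline_between_general φ ψ μ ω c Rminus Rplus hφ1 hμψ hω hne hc0 hc1 hRm hRmp hzero
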